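/- arXiv:2106.06776 — 2 statements merged into one kernel-verified Lean document; each statement's English description precedes it below -/
import Mathlib

section
/- Suppose the bimodal piecewise affine system ẋ = A_1 x + B_1 w + d_1 (if cᵀx + f < 0), ẋ = A_2 x + B_2 w + d_2 (if cᵀx + f ≥ 0) has continuous right-hand side, i.e. for every x ∈ ℝⁿ with cᵀx + f = 0 and every w ∈ ℝ^m one has A_1 x + B_1 w + d_1 = A_2 x + B_2 w + d_2, where c ≠ 0. Then B_1 = B_2 and there exists a vector h ∈ ℝⁿ such that A_1 − A_2 = h cᵀ and d_1 − d_2 = h f. -/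
open Matrix

/-- If the bimodal piecewise affine system
`ẋ = A₁x + B₁w + d₁` (if `cᵀx + f < 0`), `ẋ = A₂x + B₂w + d₂` (if `cᵀx + f ≥ 0`)
has continuous right-hand side, i.e. `cᵀx + f = 0` implies
`A₁x + B₁w + d₁ = A₂x + B₂w + d₂` for all `w`, and `c ≠ 0`, then `B₁ = B₂` and
there is `h ∈ ℝⁿ` with `A₁ − A₂ = h cᵀ` and `d₁ − d₂ = h f`. -/
theorem continuity_implies_rank_one_structure
    (n m : ℕ) (hn : 1 ≤ n) (hm : 1 ≤ m)
    (A₁ A₂ : Matrix (Fin n) (Fin n) ℝ) (B₁ B₂ : Matrix (Fin n) (Fin m) ℝ)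
    (d₁ d₂ c : Fin n → ℝ) (f : ℝ) (hc : c ≠ 0)
    (hcont : ∀ (x : Fin n → ℝ) (w : Fin m → ℝ), c ⬝ᵥ x + f = 0 →
      A₁ *ᵥ x + B₁ *ᵥ w + d₁ = A₂ *ᵥ x + B₂ *ᵥ w + d₂) :
    B₁ = B₂ ∧ ∃ h : Fin n → ℝ,
      (A₁ - A₂ = Matrix.of fun i j => h i * c j) ∧ d₁ - d₂ = f • h := by
  have hcc : c ⬝ᵥ c ≠ 0 := fun h => hc (by
    simpa using (dotProduct_self_eq_zero (v := c)).mp h)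
  set x₀ : Fin n → ℝ := (-f / (c ⬝ᵥ c)) • c with hx₀
  have hcx₀ : c ⬝ᵥ x₀ = -f := by
    simp [hx₀, dotProduct_smul, smul_eq_mul]
    field_simp
  have hbase : A₁ *ᵥ x₀ + d₁ = A₂ *ᵥ x₀ + d₂ := by
    have := hcont x₀ 0 (by rw [hcx₀]; ring)
    simpa using this
  have hB : B₁ = B₂ := by
    ext i j
    have h1 := hcont x₀ (Pi.single j 1) (by rw [hcx₀]; ring)
    have hi := congrFun h1 i
    have hb := congrFun hbase i
    simp only [Pi.add_apply] at hi hb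
    have h2 : (B₁ *ᵥ Pi.single j 1) i = (B₂ *ᵥ Pi.single j 1) i := by linarith
    simpa [mulVec_single] using h2
  -- kernel property
  have hker : ∀ z : Fin n → ℝ, c ⬝ᵥ z = 0 → (A₁ - A₂) *ᵥ z = 0 := by
    intro z hz
    have h1 := hcont (x₀ + z) 0 (by rw [dotProduct_add, hcx₀, hz]; ring)
    simp only [mulVec_zero, add_zero, mulVec_add] at h1
    have : A₁ *ᵥ z = A₂ *ᵥ z := by
      have e := congrArg (fun v => v - (A₁ *ᵥ x₀ + d₁)) h1
      simp only [hbase] at e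
      funext i
      have := congrFun h1 i
      have hb := congrFun hbase i
      simp [Pi.add_apply] at this hb ⊢
      linarith
    rw [sub_mulVec, this, sub_self]
  -- general formula
  set h : Fin n → ℝ := (c ⬝ᵥ c)⁻¹ • ((A₁ - A₂) *ᵥ c) with hh
  have hgen : ∀ x : Fin n → ℝ, (A₁ - A₂) *ᵥ x = (c ⬝ᵥ x) • h := by
    intro x
    have hz : c ⬝ᵥ (x - ((c ⬝ᵥ x) / (c ⬝ᵥ c)) • c) = 0 := by
      simp [dotProduct_sub, dotProduct_smul, smul_eq_mul, div_mul_eq_mul_div,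
        mul_div_assoc, div_self hcc]
    have := hker _ hz
    rw [mulVec_sub, mulVec_smul, sub_eq_zero] at this
    rw [this, hh]
    funext i
    simp only [Pi.smul_apply, smul_eq_mul]
    field_simp
  refine ⟨hB, h, ?_, ?_⟩
  · ext i j
    have := congrFun (hgen (Pi.single j 1)) i
    simpa [mulVec_single, mul_comm] using this
  · have e := congrArg (fun v => v - (A₂ *ᵥ x₀ + d₁)) hbase
    have : d₁ - d₂ = -((A₁ - A₂) *ᵥ x₀) := by
      funext i
      have := congrFun hbase i
      simp [sub_mulVec, Pi.add_apply] at this ⊢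
      linarith
    rw [this, hgen, hcx₀]
    simp
end

section
/- (Lemma 3.4) Let P_1, P_2 ∈ ℝ^{n×n} be symmetric matrices, b_1, b_2 ∈ ℝⁿ and e_1, e_2 ∈ ℝ. If Tᵀ [[P_1 − P_2, b_1 − b_2],[(b_1 − b_2)ᵀ, e_1 − e_2]] T = 0, where T is the (n+1)×(2n−1) matrix whose columns are (r_0;1) and the columns of (R̂;0) and (−R̂;0), then xᵀP_1 x + 2 b_1ᵀ x + e_1 = xᵀP_2 x + 2 b_2ᵀ x + e_2 for all x ∈ Σ_0. -/
open Matrix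

noncomputable section

/-- The n×(n−1) matrix R̂ (state dimension is `n+1`, so R̂ has `n` columns):
first row `(−c₂/c₁, …, −c_n/c₁)`, lower block the identity. -/
def Rhat {n : ℕ} (c : Fin (n+1) → ℝ) : Matrix (Fin (n+1)) (Fin n) ℝ :=
  Matrix.of fun i j =>
    Fin.cases (motive := fun _ => ℝ) (-(c j.succ) / c 0)
      (fun k => if k = j then (1:ℝ) else 0) i

/-- The vector `r₀ = (−f/c₁, 0, …, 0)ᵀ`. -/
def rZero {n : ℕ} (c : Fin (n+1) → ℝ) (f : ℝ) : Fin (n+1) → ℝ :=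
  fun i => if i = 0 then -f / c 0 else 0

/-- The symmetric block matrix `[[P, b],[bᵀ, e]]`. -/
def quadMat {N : Type*} (P : Matrix N N ℝ) (b : N → ℝ) (e : ℝ) :
    Matrix (N ⊕ Unit) (N ⊕ Unit) ℝ :=
  Matrix.fromBlocks P (Matrix.of fun i _ => b i) (Matrix.of fun _ j => b j)
    (Matrix.of fun _ _ => e)

/-- The (n+1)×(2n) matrix with columns `(r₀;1)`, `(u;0)`, the columns of `(R̂;0)`
and the columns of `(−R̂;0)`. -/
def Smat {n : ℕ} (c : Fin (n+1) → ℝ) (f : ℝ) (u : Fin (n+1) → ℝ) :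
    Matrix (Fin (n+1) ⊕ Unit) (Unit ⊕ Unit ⊕ Fin n ⊕ Fin n) ℝ :=
  Matrix.of fun i j =>
    match j with
    | Sum.inl _ => Sum.elim (rZero c f) (fun _ => (1:ℝ)) i
    | Sum.inr (Sum.inl _) => Sum.elim u (fun _ => (0:ℝ)) i
    | Sum.inr (Sum.inr (Sum.inl k)) => Sum.elim (fun i' => Rhat c i' k) (fun _ => (0:ℝ)) i
    | Sum.inr (Sum.inr (Sum.inr k)) => Sum.elim (fun i' => -Rhat c i' k) (fun _ => (0:ℝ)) i

/-- The (n+1)×(2n−1) matrix with columns `(r₀;1)`, the columns of `(R̂;0)`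
and the columns of `(−R̂;0)`. -/
def Tmat {n : ℕ} (c : Fin (n+1) → ℝ) (f : ℝ) :
    Matrix (Fin (n+1) ⊕ Unit) (Unit ⊕ Fin n ⊕ Fin n) ℝ :=
  Matrix.of fun i j =>
    match j with
    | Sum.inl _ => Sum.elim (rZero c f) (fun _ => (1:ℝ)) i
    | Sum.inr (Sum.inl k) => Sum.elim (fun i' => Rhat c i' k) (fun _ => (0:ℝ)) i
    | Sum.inr (Sum.inr k) => Sum.elim (fun i' => -Rhat c i' k) (fun _ => (0:ℝ)) i

/-- `Q >_{ℝ₊^ι} 0` : `zᵀ Q z > 0` for every nonzero entrywise-nonnegative `z`. -/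
def PosOnNonnegOrthant {ι : Type*} [Fintype ι] (Q : Matrix ι ι ℝ) : Prop :=
  ∀ z : ι → ℝ, (∀ j, 0 ≤ z j) → z ≠ 0 → 0 < z ⬝ᵥ Q *ᵥ z

/-! On `Σ₀` the first coordinate is determined by the others, `x = r₀ + R̂ (x₂, …, xₙ)`, so
`(x; 1) = T w` with `w = (1, x₂, …, xₙ, 0, …, 0)`. The difference of the two quadratics at `x` is
the quadratic form of `[[P₁ − P₂, b₁ − b₂], [(b₁ − b₂)ᵀ, e₁ − e₂]]` at `(x; 1)`, i.e. the form of
`Tᵀ [[…]] T = 0` at `w`. -/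

theorem dotProduct_transpose_mul_mul_mulVec {R m k : Type*} [CommSemiring R] [Fintype m]
    [Fintype k] (T : Matrix m k R) (M : Matrix m m R) (v w : k → R) :
    v ⬝ᵥ (Tᵀ * M * T) *ᵥ w = T *ᵥ v ⬝ᵥ M *ᵥ (T *ᵥ w) := by
  rw [← mulVec_mulVec, ← mulVec_mulVec, dotProduct_mulVec v, vecMul_transpose]

theorem quadMat_homogenize {N : Type*} [Fintype N] (P : Matrix N N ℝ) (b : N → ℝ) (e : ℝ)
    (x : N → ℝ) :
    Sum.elim x (fun _ => 1) ⬝ᵥ quadMat P b e *ᵥ Sum.elim x (fun _ => 1)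
      = x ⬝ᵥ P *ᵥ x + 2 * (b ⬝ᵥ x) + e := by
  rw [quadMat, fromBlocks_mulVec, sumElim_dotProduct_sumElim]
  simp [mulVec, dotProduct, mul_add, Finset.sum_add_distrib, mul_comm, two_mul, add_assoc]

theorem Tmat_mulVec {n : ℕ} (c : Fin (n+1) → ℝ) (f t : ℝ) (y z : Fin n → ℝ) :
    Tmat c f *ᵥ Sum.elim (fun _ => t) (Sum.elim y z)
      = Sum.elim (t • rZero c f + Rhat c *ᵥ (y - z)) (fun _ => t) := by
  rw [mulVec_sub]
  ext (i | _)
  · simp [Tmat, mulVec, dotProduct, Fintype.sum_sum_type, mul_comm, sub_eq_add_neg]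
  · simp [Tmat, mulVec, dotProduct, Fintype.sum_sum_type]

theorem rZero_add_Rhat_mulVec_tail {n : ℕ} {c : Fin (n+1) → ℝ} (hc : c 0 ≠ 0) {f : ℝ}
    {x : Fin (n+1) → ℝ} (hx : c ⬝ᵥ x + f = 0) : rZero c f + Rhat c *ᵥ Fin.tail x = x := by
  ext i
  cases i using Fin.cases with
  | zero =>
    rw [dotProduct, Fin.sum_univ_succ] at hx
    simp only [Pi.add_apply, rZero, Rhat, mulVec, dotProduct, Fin.tail, of_apply,
      Fin.cases_zero, if_true, neg_div, neg_mul, Finset.sum_neg_distrib, div_mul_eq_mul_div,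
      ← Finset.sum_div]
    field_simp
    linarith
  | succ j => simp [rZero, Rhat, mulVec, dotProduct, Fin.tail]

theorem quadratics_agree_on_hyperplane_general
    (n : ℕ) (c : Fin (n+1) → ℝ) (hc : c 0 ≠ 0) (f : ℝ)
    (P₁ P₂ : Matrix (Fin (n+1)) (Fin (n+1)) ℝ)
    (b₁ b₂ : Fin (n+1) → ℝ) (e₁ e₂ : ℝ)
    (hT : (Tmat c f)ᵀ * quadMat (P₁ - P₂) (b₁ - b₂) (e₁ - e₂) * Tmat c f = 0) :
    ∀ x : Fin (n+1) → ℝ, c ⬝ᵥ x + f = 0 →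
      x ⬝ᵥ P₁ *ᵥ x + 2 * (b₁ ⬝ᵥ x) + e₁ = x ⬝ᵥ P₂ *ᵥ x + 2 * (b₂ ⬝ᵥ x) + e₂ := by
  intro x hx
  let w : Unit ⊕ Fin n ⊕ Fin n → ℝ := Sum.elim (fun _ => 1) (Sum.elim (Fin.tail x) 0)
  have hw := dotProduct_transpose_mul_mul_mulVec (Tmat c f)
    (quadMat (P₁ - P₂) (b₁ - b₂) (e₁ - e₂)) w w
  rw [hT, Tmat_mulVec, sub_zero, one_smul, rZero_add_Rhat_mulVec_tail hc hx,
    quadMat_homogenize, zero_mulVec, dotProduct_zero, sub_mulVec, dotProduct_sub,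
    sub_dotProduct] at hw
  linarith

/-- Lemma 3.4: if `Tᵀ [[P₁−P₂, b₁−b₂],[(b₁−b₂)ᵀ, e₁−e₂]] T = 0`, then the two quadratic
functions agree on the hyperplane `Σ₀ = {x | cᵀx + f = 0}`. -/
theorem quadratics_agree_on_hyperplane
    (n : ℕ) (c : Fin (n+1) → ℝ) (hc : c 0 ≠ 0) (f : ℝ)
    (P₁ P₂ : Matrix (Fin (n+1)) (Fin (n+1)) ℝ) (hP₁ : P₁.IsSymm) (hP₂ : P₂.IsSymm)
    (b₁ b₂ : Fin (n+1) → ℝ) (e₁ e₂ : ℝ)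
    (hT : (Tmat c f)ᵀ * quadMat (P₁ - P₂) (b₁ - b₂) (e₁ - e₂) * Tmat c f = 0) :
    ∀ x : Fin (n+1) → ℝ, c ⬝ᵥ x + f = 0 →
      x ⬝ᵥ P₁ *ᵥ x + 2 * (b₁ ⬝ᵥ x) + e₁ = x ⬝ᵥ P₂ *ᵥ x + 2 * (b₂ ⬝ᵥ x) + e₂ :=
  quadratics_agree_on_hyperplane_general n c hc f P₁ P₂ b₁ b₂ e₁ e₂ hT
end
end
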